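/- Let (X,φ) be an expansive dynamical system and x, y ∈ X. If x is synchronizing and x ∼_lc y, then y is synchronizing. -/

import Mathlib

open Filter Topology Set

namespace Paper

variable {X : Type*} [MetricSpace X] [CompactSpace X]

/-- The `n`-th iterate (for `n : ℤ`) of the homeomorphism `φ`. -/
def It (φ : X ≃ₜ X) (n : ℤ) : X → X := fun x => (φ.toEquiv ^ n) x

/-- The local stable set `Xˢ(x, ε)`. -/
def locS (φ : X ≃ₜ X) (x : X) (ε : ℝ) : Set X :=
  {y | ∀ n : ℕ, dist (It φ n x) (It φ n y) ≤ ε}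

/-- The local unstable set `Xᵘ(x, ε)`. -/
def locU (φ : X ≃ₜ X) (x : X) (ε : ℝ) : Set X :=
  {y | ∀ n : ℕ, dist (It φ (-(n : ℤ)) x) (It φ (-(n : ℤ)) y) ≤ ε}

/-- The set `D_ε` on which the bracket is defined. -/
def Dset (φ : X ≃ₜ X) (ε : ℝ) : Set (X × X) :=
  {p | (locS φ p.1 ε ∩ locU φ p.2 ε).Nonempty}

/-- `(X, φ)` is expansive with expansiveness constant `εX`. -/
def IsExpansive (φ : X ≃ₜ X) (εX : ℝ) : Prop :=
  0 < εX ∧ ∀ x y : X, (∀ n : ℤ, dist (It φ n x) (It φ n y) ≤ εX) → x = y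

/-- The metric is adapted (Fried), with constants `η` and `lam`. -/
def IsAdapted (φ : X ≃ₜ X) (η lam : ℝ) : Prop :=
  0 < η ∧ 0 < lam ∧ lam < 1 ∧
    (∀ x y : X, y ∈ locS φ x η → dist (φ x) (φ y) ≤ lam * dist x y) ∧
    (∀ x y : X, y ∈ locU φ x η → dist (φ.symm x) (φ.symm y) ≤ lam * dist x y)

/-- `p` is a periodic point of `φ`. -/
def IsPeriodic (φ : X ≃ₜ X) (p : X) : Prop :=
  ∃ n : ℕ, 1 ≤ n ∧ It φ n p = p

/-- `x` is a synchronizing point: `(x, x)` is in the interior of `D_ε` for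
some `0 < ε ≤ ε₀`. -/
def IsSyncPt (φ : X ≃ₜ X) (ε₀ : ℝ) (x : X) : Prop :=
  ∃ ε : ℝ, 0 < ε ∧ ε ≤ ε₀ ∧ (x, x) ∈ interior (Dset φ ε)

/-- `(X, φ)` is irreducible. -/
def Irred (φ : X ≃ₜ X) : Prop :=
  ∀ U V : Set X, IsOpen U → IsOpen V → U.Nonempty → V.Nonempty →
    ∃ n : ℕ, 0 < n ∧ (It φ n '' U ∩ V).Nonempty

/-- `(X, φ)` is mixing. -/
def Mixing (φ : X ≃ₜ X) : Prop :=
  ∀ U V : Set X, IsOpen U → IsOpen V → U.Nonempty → V.Nonempty →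
    ∃ N : ℕ, ∀ n : ℕ, N ≤ n → (It φ n '' U ∩ V).Nonempty

/-- Every point of `(X, φ)` is non-wandering. -/
def NonWandering (φ : X ≃ₜ X) : Prop :=
  ∀ x : X, ∀ U ∈ 𝓝 x, ∃ n : ℕ, 0 < n ∧ (It φ n '' U ∩ U).Nonempty

/-- Stable equivalence `x ∼ₛ y`. -/
def StableEq (φ : X ≃ₜ X) (x y : X) : Prop :=
  Tendsto (fun n : ℕ => dist (It φ n x) (It φ n y)) atTop (𝓝 0)

/-- Unstable equivalence `x ∼ᵤ y`. -/
def UnstableEq (φ : X ≃ₜ X) (x y : X) : Prop :=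
  Tendsto (fun n : ℕ => dist (It φ (-(n : ℤ)) x) (It φ (-(n : ℤ)) y)) atTop (𝓝 0)

/-- Local conjugacy `x ∼_lc y`: a homeomorphism `γ : U → V` of open
neighborhoods with `γ x = y` and `sup_{z ∈ U} d(φⁿ z, φⁿ (γ z)) → 0` as
`n → ±∞`. -/
def LocConj (φ : X ≃ₜ X) (x y : X) : Prop :=
  ∃ (U V : Set X) (γ γinv : X → X),
    IsOpen U ∧ IsOpen V ∧ x ∈ U ∧ y ∈ V ∧ γ x = y ∧
    Set.MapsTo γ U V ∧ Set.MapsTo γinv V U ∧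
    (∀ z ∈ U, γinv (γ z) = z) ∧ (∀ w ∈ V, γ (γinv w) = w) ∧
    ContinuousOn γ U ∧ ContinuousOn γinv V ∧
    (∀ ε : ℝ, 0 < ε → ∃ N : ℕ, ∀ n : ℤ, (N : ℤ) ≤ |n| → ∀ z ∈ U,
      dist (It φ n z) (It φ n (γ z)) ≤ ε)

/-- Stable local conjugacy `x ∼_lcs y`: a homeomorphism of `Xᵘ(x, δ)` onto
its image in `Xᵘ(y, δ')` sending `x` to `y`, uniformly asymptotic in forward
time. -/
def StableLC (φ : X ≃ₜ X) (x y : X) : Prop :=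
  ∃ (δ δ' : ℝ) (γ : X → X), 0 < δ ∧ 0 < δ' ∧
    Set.MapsTo γ (locU φ x δ) (locU φ y δ') ∧
    Set.InjOn γ (locU φ x δ) ∧ ContinuousOn γ (locU φ x δ) ∧ γ x = y ∧
    (∀ ε : ℝ, 0 < ε → ∃ N : ℕ, ∀ n : ℕ, N ≤ n → ∀ z ∈ locU φ x δ,
      dist (It φ n z) (It φ n (γ z)) ≤ ε)

/-- Unstable local conjugacy `x ∼_lcu y`: a homeomorphism of `Xˢ(x, δ)` onto
its image in `Xˢ(y, δ')` sending `x` to `y`, uniformly asymptotic in backward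
time. -/
def UnstableLC (φ : X ≃ₜ X) (x y : X) : Prop :=
  ∃ (δ δ' : ℝ) (γ : X → X), 0 < δ ∧ 0 < δ' ∧
    Set.MapsTo γ (locS φ x δ) (locS φ y δ') ∧
    Set.InjOn γ (locS φ x δ) ∧ ContinuousOn γ (locS φ x δ) ∧ γ x = y ∧
    (∀ ε : ℝ, 0 < ε → ∃ N : ℕ, ∀ n : ℕ, N ≤ n → ∀ z ∈ locS φ x δ,
      dist (It φ (-(n : ℤ)) z) (It φ (-(n : ℤ)) (γ z)) ≤ ε)

end Paper

/-! Pull a pair `(a, b)` near `(y, y)` back along the conjugacy to `(a', b')` near `x` and take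
`z ∈ Xˢ(a', ε) ∩ Xᵘ(b', ε)`. Expansiveness and compactness force `z` close to `x`, so `γ z` is
defined, and `γ z ∈ Xˢ(a, ε₀) ∩ Xᵘ(b, ε₀)`: in large forward time `γ` moves points very little
and the adapted metric gives `d(φⁿ a', φⁿ z) ≤ λⁿ ε`, while in bounded time the continuity at `x`
of the finitely many maps `φⁿ ∘ γ` keeps all orbits close. Backward time is the same argument
for `φ⁻¹`, since `Xᵘ` for `φ` is `Xˢ` for `φ⁻¹`. -/

namespace Paper

theorem nhds_prod_le_map_prodMap {α β : Type*} [TopologicalSpace α] [TopologicalSpace β]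
    {γ : α → β} {γinv : β → α} {x : α} {y : β} (hγinv : Tendsto γinv (𝓝 y) (𝓝 x))
    (hright : ∀ᶠ w in 𝓝 y, γ (γinv w) = w) :
    𝓝 (y, y) ≤ map (Prod.map γ γ) (𝓝 (x, x)) := by
  have h : 𝓝 y ≤ map γ (𝓝 x) := le_map_of_right_inverse hright hγinv
  rw [nhds_prod_eq, nhds_prod_eq, ← prod_map_map_eq']
  exact prod_mono h h

variable {X : Type*} [MetricSpace X]

section Iterates

variable (φ : X ≃ₜ X)

theorem It_eq_zpow (n : ℤ) : It φ n = ⇑(φ ^ n) := by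
  let toPerm : (X ≃ₜ X) →* Equiv.Perm X :=
    { toFun := Homeomorph.toEquiv, map_one' := rfl, map_mul' := fun _ _ => rfl }
  funext x
  exact congrArg (· x) (map_zpow toPerm φ n).symm

theorem It_natCast (n : ℕ) : It φ n = ⇑(φ ^ n) := by
  rw [It_eq_zpow, zpow_natCast]

theorem It_symm (n : ℤ) : It φ.symm n = It φ (-n) := by
  rw [It_eq_zpow, It_eq_zpow, ← inv_zpow']
  rfl

theorem continuous_It (n : ℤ) : Continuous (It φ n) := by
  rw [It_eq_zpow]
  exact (φ ^ n).continuous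

theorem locS_symm (x : X) (ε : ℝ) : locS φ.symm x ε = locU φ x ε := by
  ext y
  simp only [locS, locU, It_symm]

theorem isAdapted_symm {η lam : ℝ} (h : IsAdapted φ η lam) : IsAdapted φ.symm η lam := by
  obtain ⟨hη, hlam, hlam1, hs, hu⟩ := h
  refine ⟨hη, hlam, hlam1, fun x y hy => hu x y ?_, fun x y hy => hs x y ?_⟩
  · rwa [← locS_symm]
  · rwa [← locS_symm, Homeomorph.symm_symm] at hy

theorem isClosed_setOf_mem_locS (ε : ℝ) : IsClosed {p : X × X | p.2 ∈ locS φ p.1 ε} := by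
  have h : {p : X × X | p.2 ∈ locS φ p.1 ε} = ⋂ n : ℕ, {p | dist (It φ n p.1) (It φ n p.2) ≤ ε} :=
    ext fun _ => by simp [locS]
  rw [h]
  exact isClosed_iInter fun n =>
    isClosed_le (((continuous_It φ n).comp continuous_fst).dist
      ((continuous_It φ n).comp continuous_snd)) continuous_const

end Iterates

section Contraction

variable (φ : X ≃ₜ X)

theorem pow_apply_mem_locS {a z : X} {ε : ℝ} (hz : z ∈ locS φ a ε) (m : ℕ) :
    (φ ^ m) z ∈ locS φ ((φ ^ m) a) ε := by
  intro k
  simpa only [It_natCast, ← Homeomorph.mul_apply, ← pow_add] using hz (k + m)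

theorem dist_pow_apply_le_of_mem_locS {η lam ε : ℝ} (had : IsAdapted φ η lam) (hεη : ε ≤ η)
    {a z : X} (hz : z ∈ locS φ a ε) (n : ℕ) :
    dist ((φ ^ n) a) ((φ ^ n) z) ≤ lam ^ n * dist a z := by
  induction n with
  | zero => simp
  | succ n ih =>
    have hmem : (φ ^ n) z ∈ locS φ ((φ ^ n) a) η :=
      fun k => (pow_apply_mem_locS φ hz n k).trans hεη
    rw [pow_succ', Homeomorph.mul_apply, Homeomorph.mul_apply, pow_succ', mul_assoc]
    exact (had.2.2.2.1 _ _ hmem).trans (mul_le_mul_of_nonneg_left ih had.2.1.le)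

theorem exists_forall_dist_It_le_of_mem_locS {η lam ε δ : ℝ} (had : IsAdapted φ η lam)
    (hεη : ε ≤ η) (hδ : 0 < δ) :
    ∃ N : ℕ, ∀ n ≥ N, ∀ a z : X, z ∈ locS φ a ε → dist (It φ n a) (It φ n z) ≤ δ := by
  have hlam := had.2.1
  have hlim : Tendsto (fun n : ℕ => lam ^ n * ε) atTop (𝓝 0) := by
    simpa using (tendsto_pow_atTop_nhds_zero_of_lt_one hlam.le had.2.2.1).mul_const ε
  obtain ⟨N, hN⟩ := eventually_atTop.1 (hlim.eventually (ge_mem_nhds hδ))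
  refine ⟨N, fun n hn a z hz => ?_⟩
  have haz : dist a z ≤ ε := by simpa [It_eq_zpow] using hz 0
  rw [It_natCast]
  calc dist ((φ ^ n) a) ((φ ^ n) z) ≤ lam ^ n * dist a z :=
        dist_pow_apply_le_of_mem_locS φ had hεη hz n
    _ ≤ lam ^ n * ε := by gcongr
    _ ≤ δ := hN n hn

end Contraction

def UniformlyForwardAsymptoticOn (φ : X ≃ₜ X) (U : Set X) (γ : X → X) : Prop :=
  ∀ δ > 0, ∃ N : ℕ, ∀ n ≥ N, ∀ z ∈ U, dist (It φ n z) (It φ n (γ z)) ≤ δ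

theorem uniformlyForwardAsymptoticOn_of_abs {φ : X ≃ₜ X} {U : Set X} {γ : X → X}
    (h : ∀ ε : ℝ, 0 < ε → ∃ N : ℕ, ∀ n : ℤ, (N : ℤ) ≤ |n| → ∀ z ∈ U,
      dist (It φ n z) (It φ n (γ z)) ≤ ε) :
    UniformlyForwardAsymptoticOn φ U γ ∧ UniformlyForwardAsymptoticOn φ.symm U γ := by
  constructor <;> intro δ hδ <;> obtain ⟨N, hN⟩ := h δ hδ <;> refine ⟨N, fun n hn => ?_⟩
  · exact hN n (by simpa using hn)
  · simp only [It_symm]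
    exact hN (-n) (by simpa using hn)

theorem exists_mem_nhds_forall_mem_locS_image (φ : X ≃ₜ X) {η lam ε δ : ℝ}
    (had : IsAdapted φ η lam) (hεη : ε ≤ η) (hδ : 0 < δ) {x : X} {U : Set X} (hU : U ∈ 𝓝 x)
    {γ : X → X} (hγ : ContinuousAt γ x) (hasymp : UniformlyForwardAsymptoticOn φ U γ) :
    ∃ T ∈ 𝓝 x, ∀ a ∈ T, ∀ z ∈ T, z ∈ locS φ a ε → γ z ∈ locS φ (γ a) δ := by
  obtain ⟨N₁, hN₁⟩ := hasymp (δ / 3) (by positivity)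
  obtain ⟨N₂, hN₂⟩ := exists_forall_dist_It_le_of_mem_locS φ had hεη (δ := δ / 3) (by positivity)
  have hbounded : ∀ᶠ u in 𝓝 x, ∀ n ∈ Finset.range (max N₁ N₂),
      dist (It φ n (γ u)) (It φ n (γ x)) < δ / 2 := by
    rw [eventually_all_finset]
    exact fun n _ =>
      Metric.tendsto_nhds.1 ((continuous_It φ n).continuousAt.comp hγ) _ (by positivity)
  refine ⟨_, inter_mem hU hbounded, fun a ha z hz haz n => ?_⟩
  rcases lt_or_ge n (max N₁ N₂) with hn | hn
  · have hn := Finset.mem_range.2 hn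
    calc dist (It φ n (γ a)) (It φ n (γ z))
        ≤ dist (It φ n (γ a)) (It φ n (γ x)) + dist (It φ n (γ z)) (It φ n (γ x)) :=
          dist_triangle_right _ _ _
      _ ≤ δ / 2 + δ / 2 := add_le_add (ha.2 n hn).le (hz.2 n hn).le
      _ = δ := by ring
  · calc dist (It φ n (γ a)) (It φ n (γ z))
        ≤ dist (It φ n (γ a)) (It φ n a) + dist (It φ n a) (It φ n z)
          + dist (It φ n z) (It φ n (γ z)) := dist_triangle4 _ _ _ _
      _ ≤ δ / 3 + δ / 3 + δ / 3 := by
          gcongr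
          · rw [dist_comm]; exact hN₁ n (le_of_max_le_left hn) a ha.1
          · exact hN₂ n (le_of_max_le_right hn) a z haz
          · exact hN₁ n (le_of_max_le_left hn) z hz.1
      _ = δ := by ring

theorem exists_mem_nhds_forall_image_mem_Dset (φ : X ≃ₜ X) {η lam ε δ : ℝ}
    (had : IsAdapted φ η lam) (hεη : ε ≤ η) (hδ : 0 < δ) {x : X} {U : Set X} (hU : U ∈ 𝓝 x)
    {γ : X → X} (hγ : ContinuousAt γ x) (hfwd : UniformlyForwardAsymptoticOn φ U γ)
    (hbwd : UniformlyForwardAsymptoticOn φ.symm U γ) :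
    ∃ T ∈ 𝓝 x, ∀ a ∈ T, ∀ b ∈ T, ∀ z ∈ T, z ∈ locS φ a ε → z ∈ locU φ b ε →
      (γ a, γ b) ∈ Dset φ δ := by
  obtain ⟨Ts, hTs, hs⟩ := exists_mem_nhds_forall_mem_locS_image φ had hεη hδ hU hγ hfwd
  obtain ⟨Tu, hTu, hu⟩ :=
    exists_mem_nhds_forall_mem_locS_image φ.symm (isAdapted_symm φ had) hεη hδ hU hγ hbwd
  refine ⟨Ts ∩ Tu, inter_mem hTs hTu, fun a ha b hb z hz hza hzb => ⟨γ z, hs a ha.1 z hz.1 hza, ?_⟩⟩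
  rw [← locS_symm] at hzb ⊢
  exact hu b hb.2 z hz.2 hzb

section Compact

variable [CompactSpace X]

theorem eventually_locS_inter_locU_subset (φ : X ≃ₜ X) {εX ε : ℝ} (hexp : IsExpansive φ εX)
    (hε : ε ≤ εX) {x : X} {s : Set X} (hs : s ∈ 𝓝 x) :
    ∀ᶠ p in 𝓝 (x, x), locS φ p.1 ε ∩ locU φ p.2 ε ⊆ s := by
  obtain ⟨t, hts, ht, hxt⟩ := mem_nhds_iff.1 hs
  let K : Set ((X × X) × X) := {q | q.2 ∈ locS φ q.1.1 ε ∧ q.2 ∈ locS φ.symm q.1.2 ε ∧ q.2 ∉ t}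
  have hK : IsClosed K :=
    ((isClosed_setOf_mem_locS φ ε).preimage (continuous_fst.fst.prodMk continuous_snd)).inter
      (((isClosed_setOf_mem_locS φ.symm ε).preimage
        (continuous_fst.snd.prodMk continuous_snd)).inter
        (ht.isClosed_compl.preimage continuous_snd))
  have hxK : (x, x) ∉ Prod.fst '' K := by
    rintro ⟨⟨_, z⟩, ⟨hzs, hzu, hzt⟩, rfl⟩
    rw [locS_symm] at hzu
    refine hzt ((hexp.2 x z fun n => ?_) ▸ hxt)
    rcases Int.eq_nat_or_neg n with ⟨m, rfl | rfl⟩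
    · exact (hzs m).trans hε
    · exact (hzu m).trans hε
  filter_upwards [(isClosedMap_fst_of_compactSpace _ hK).isOpen_compl.mem_nhds hxK]
    with p hp z ⟨hzs, hzu⟩
  by_contra hzs'
  exact hp ⟨(p, z), ⟨hzs, by rwa [locS_symm], fun hzt => hzs' (hts hzt)⟩, rfl⟩

/-- being synchronizing is invariant under local conjugacy. -/
theorem locConj_preserves_sync (φ : X ≃ₜ X) (εX η lam : ℝ)
    (hexp : IsExpansive φ εX) (had : IsAdapted φ η lam) (x y : X)
    (hx : IsSyncPt φ (min η (εX / 2)) x) (hlc : LocConj φ x y) :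
    IsSyncPt φ (min η (εX / 2)) y := by
  obtain ⟨ε, hε, hεle, hxD⟩ := hx
  obtain ⟨U, V, γ, γinv, hU, hV, hxU, hyV, hγx, -, -, hleft, hright, hγ, hγinv, hasymp⟩ := hlc
  have hεη : ε ≤ η := hεle.trans (min_le_left _ _)
  have hεX : ε ≤ εX := hεle.trans ((min_le_right _ _).trans (half_le_self hexp.1.le))
  have hε₀ : 0 < min η (εX / 2) := lt_min had.1 (half_pos hexp.1)
  have hUx := hU.mem_nhds hxU
  obtain ⟨hfwd, hbwd⟩ := uniformlyForwardAsymptoticOn_of_abs hasymp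
  obtain ⟨T, hT, hTD⟩ := exists_mem_nhds_forall_image_mem_Dset φ had hεη hε₀ hUx
    (hγ.continuousAt hUx) hfwd hbwd
  have hγinv_y : Tendsto γinv (𝓝 y) (𝓝 x) := by
    simpa [← hγx, hleft x hxU] using (hγinv.continuousAt (hV.mem_nhds hyV)).tendsto
  have hcover := nhds_prod_le_map_prodMap hγinv_y (eventually_of_mem (hV.mem_nhds hyV) hright)
  refine ⟨_, hε₀, le_rfl, mem_interior_iff_mem_nhds.2 (hcover (mem_map.2 ?_))⟩
  filter_upwards [mem_interior_iff_mem_nhds.1 hxD,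
    eventually_locS_inter_locU_subset φ hexp hεX hT, prod_mem_nhds hT hT]
    with p ⟨z, hzs, hzu⟩ hsub ⟨ha, hb⟩
  exact hTD _ ha _ hb z (hsub ⟨hzs, hzu⟩) hzs hzu

end Compact

end Paper
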